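/- For μ > 0 and any continuous real function E on T^d with maximum E_max, the function z ↦ Δ_μ(z) = 1 + μ ∫_{T^d} η(dq)/(E(q) - z) is strictly increasing on (E_max, ∞), tends to 1 as z → +∞, and tends to -∞ as z ↓ E_max when d ≤ 2 (since ∫ η(dq)/(E_max - E(q)) = +∞ for the lattice dispersion); hence Δ_μ has a unique zero e_μ > E_max. -/

import Mathlib

open MeasureTheory Real

instance : Fact (0 < 2 * π) := ⟨by positivity⟩

/-- Equip the circle `ℝ/2πℤ` with its Haar measure. -/
noncomputable instance : MeasureSpace Real.Angle :=
  inferInstanceAs (MeasureSpace (AddCircle (2 * π)))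

instance : SigmaFinite (volume : Measure Real.Angle) :=
  inferInstanceAs (SigmaFinite (volume : Measure (AddCircle (2 * π))))

/-- The lattice dispersion relation `ε(p) = 2∑ᵢ (1 - cos pⁱ)` on the torus `T^d`. -/
noncomputable def eps (d : ℕ) (p : Fin d → Real.Angle) : ℝ :=
  2 * ∑ i, (1 - (p i).cos)

/-- The normalized Haar measure `η` on the torus `T^d`. -/
noncomputable def haarT (d : ℕ) : Measure (Fin d → Real.Angle) :=
  (ENNReal.ofReal ((2 * π) ^ d))⁻¹ • volume

/-- The two-particle dispersion `E_{γ,k}(q) = ε(q) + γ ε(k - q)`. -/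
noncomputable def E2 (d : ℕ) (γ : ℝ) (k q : Fin d → Real.Angle) : ℝ :=
  eps d q + γ * eps d (k - q)

/-!
Writing `Δ(z) = 1 - μ ∫ (z - E)⁻¹ dη`, the integrand is positive and strictly decreasing in
`z > E_max` and bounded by `(z - E_max)⁻¹`, so monotonicity, continuity and the limit `1` at `+∞`
hold for any bounded measurable `E` and any probability measure. The limit `-∞` at `E_max` comes
from monotone convergence once `∫ dη / (E_max - E) = ∞`. For the lattice dispersion this holds
because at a maximiser `q₀` each coordinate of `E` is a trigonometric polynomial of degree one
with vanishing derivative, so `E_max - E(q₀ + h) ≤ (1 + γ) |h|²`; hence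
`η {E_max - E < t} ≳ t ^ (d / 2) ≥ t` for `d ≤ 2`, and the layer-cake formula bounds the integral
below by `∫₁^∞ ds / s = ∞`. The unique zero follows from the intermediate value theorem.
-/

open Filter Set Topology

instance : CompactSpace Real.Angle := inferInstanceAs (CompactSpace (AddCircle (2 * π)))
instance : BorelSpace Real.Angle := inferInstanceAs (BorelSpace (AddCircle (2 * π)))

lemma continuous_E2 (d : ℕ) (γ : ℝ) (k : Fin d → Real.Angle) : Continuous (E2 d γ k) := by
  have hε : Continuous (eps d) := continuous_const.mul (continuous_finsetSum _ fun i _ =>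
    continuous_const.sub (Real.Angle.continuous_cos.comp (continuous_apply i)))
  exact hε.add (continuous_const.mul (hε.comp (continuous_const.sub continuous_id)))

lemma norm_inv_sub_le {X : Type*} {E : X → ℝ} {M z : ℝ} (hM : ∀ q, E q ≤ M) (hz : M < z)
    (q : X) : ‖(E q - z)⁻¹‖ ≤ (z - M)⁻¹ := by
  rw [norm_inv, Real.norm_eq_abs, abs_sub_comm, abs_of_pos (by linarith [hM q])]
  exact inv_anti₀ (by linarith) (by linarith [hM q])

lemma tendsto_lintegral_inv_sub_nhdsGT {X : Type*} [MeasurableSpace X] {η : Measure X}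
    {E : X → ℝ} (hE : Measurable E) (M : ℝ) :
    Tendsto (fun z => ∫⁻ q, (ENNReal.ofReal (z - E q))⁻¹ ∂η) (𝓝[>] M)
      (𝓝 (∫⁻ q, (ENNReal.ofReal (M - E q))⁻¹ ∂η)) := by
  set L := fun z => ∫⁻ q, (ENNReal.ofReal (z - E q))⁻¹ ∂η
  have hanti : Antitone L := fun z z' h => lintegral_mono fun q =>
    ENNReal.inv_le_inv.2 (ENNReal.ofReal_le_ofReal (by linarith))
  obtain ⟨u, hu_anti, hu_gt, hu_lim⟩ := exists_seq_strictAnti_tendsto M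
  have hcont : Continuous fun z : ℝ => (ENNReal.ofReal z)⁻¹ :=
    continuous_inv.comp ENNReal.continuous_ofReal
  have hseq : Tendsto (fun n => L (u n)) atTop (𝓝 (L M)) :=
    lintegral_tendsto_of_tendsto_of_monotone
      (fun n => (measurable_const.sub hE).ennreal_ofReal.inv.aemeasurable)
      (.of_forall fun q n m hnm => ENNReal.inv_le_inv.2
        (ENNReal.ofReal_le_ofReal (by linarith [hu_anti.antitone hnm])))
      (.of_forall fun q => (hcont.tendsto _).comp (hu_lim.sub_const (E q)))
  have hsup : sSup (L '' Ioi M) = L M :=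
    le_antisymm (sSup_le (forall_mem_image.2 fun z hz => hanti (le_of_lt hz)))
      (le_of_tendsto' hseq fun n => le_sSup (mem_image_of_mem L (hu_gt n)))
  simpa only [hsup] using hanti.tendsto_nhdsGT M

section ResolventIntegral

variable {X : Type*} [MeasurableSpace X] {η : Measure X} [IsFiniteMeasure η]
  {E : X → ℝ} {M : ℝ}

lemma integrable_inv_sub (hE : Measurable E) (hM : ∀ q, E q ≤ M) {z : ℝ} (hz : M < z) :
    Integrable (fun q => (E q - z)⁻¹) η :=
  .of_bound (hE.sub_const z).inv.aestronglyMeasurable _ (.of_forall (norm_inv_sub_le hM hz))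

lemma strictMonoOn_integral_inv_sub [NeZero η] (hE : Measurable E) (hM : ∀ q, E q ≤ M) :
    StrictMonoOn (fun z => ∫ q, (E q - z)⁻¹ ∂η) (Ioi M) := by
  intro z hz z' hz' hzz'
  have hlt : ∀ q, (E q - z)⁻¹ < (E q - z')⁻¹ := fun q => by
    rw [← neg_sub, inv_neg, ← neg_sub z', inv_neg, neg_lt_neg_iff]
    exact inv_strictAnti₀ (by linarith [hM q, mem_Ioi.1 hz]) (by linarith)
  have hint' := integrable_inv_sub (η := η) hE hM hz'
  have hint := integrable_inv_sub (η := η) hE hM hz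
  rw [← sub_pos, ← integral_sub hint' hint,
    integral_pos_iff_support_of_nonneg (fun q => (sub_pos.2 (hlt q)).le) (hint'.sub hint)]
  have hsupp : Function.support (fun q => (E q - z')⁻¹ - (E q - z)⁻¹) = univ :=
    eq_univ_of_forall fun q => sub_ne_zero.2 (hlt q).ne'
  simp [hsupp, NeZero.ne η]

lemma tendsto_integral_inv_sub_atTop (hM : ∀ q, E q ≤ M) :
    Tendsto (fun z => ∫ q, (E q - z)⁻¹ ∂η) atTop (𝓝 0) := by
  have hlim : Tendsto (fun z => (z - M)⁻¹ * η.real univ) atTop (𝓝 (0 * η.real univ)) :=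
    (tendsto_inv_atTop_zero.comp (tendsto_atTop_add_const_right _ (-M) tendsto_id)).mul_const _
  rw [zero_mul] at hlim
  refine squeeze_zero_norm' ((eventually_gt_atTop M).mono fun z hz => ?_) hlim
  exact norm_integral_le_of_norm_le_const (.of_forall (norm_inv_sub_le hM hz))

lemma continuousOn_integral_inv_sub (hE : Measurable E) (hM : ∀ q, E q ≤ M) :
    ContinuousOn (fun z => ∫ q, (E q - z)⁻¹ ∂η) (Ioi M) := by
  intro z (hz : M < z)
  obtain ⟨z₀, hMz₀, hz₀z⟩ := exists_between hz
  refine (continuousAt_of_dominated (bound := fun _ => (z₀ - M)⁻¹)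
    (.of_forall fun w => (hE.sub_const w).inv.aestronglyMeasurable) ?_ (integrable_const _)
    (.of_forall fun q => ?_)).continuousWithinAt
  · filter_upwards [eventually_gt_nhds hz₀z] with w hw
    exact .of_forall fun q => (norm_inv_sub_le hM (hMz₀.trans hw) q).trans
      (inv_anti₀ (by linarith) (by linarith))
  · exact (continuousAt_const.sub continuousAt_id).inv₀
      (sub_neg.2 (show E q < z by linarith [hM q])).ne

lemma ofReal_integral_inv_sub (hE : Measurable E) (hM : ∀ q, E q ≤ M) {z : ℝ} (hz : M < z) :
    ENNReal.ofReal (-∫ q, (E q - z)⁻¹ ∂η) = ∫⁻ q, (ENNReal.ofReal (z - E q))⁻¹ ∂η := by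
  have hpos : ∀ q, 0 < z - E q := fun q => by linarith [hM q]
  have hint : Integrable (fun q => (z - E q)⁻¹) η :=
    (integrable_inv_sub hE hM hz).neg.congr
      (.of_forall fun q => by simp only [Pi.neg_apply, ← inv_neg, neg_sub])
  simp_rw [← integral_neg, ← inv_neg, neg_sub]
  rw [ofReal_integral_eq_lintegral_ofReal hint (.of_forall fun q => (inv_pos.2 (hpos q)).le)]
  exact lintegral_congr fun q => ENNReal.ofReal_inv_of_pos (hpos q)

lemma tendsto_integral_inv_sub_nhdsGT_atBot (hE : Measurable E) (hM : ∀ q, E q ≤ M)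
    (hdiv : ∫⁻ q, (ENNReal.ofReal (M - E q))⁻¹ ∂η = ⊤) :
    Tendsto (fun z => ∫ q, (E q - z)⁻¹ ∂η) (𝓝[>] M) atBot := by
  have h := (hdiv ▸ tendsto_lintegral_inv_sub_nhdsGT hE M).congr'
    (eventually_nhdsWithin_of_forall fun z hz => (ofReal_integral_inv_sub hE hM hz).symm)
  exact (tendsto_neg_atTop_atBot.comp (ENNReal.tendsto_ofReal_nhds_top.1 h)).congr
    fun z => neg_neg _

end ResolventIntegral

lemma existsUnique_eq_zero_of_strictMonoOn_Ioi {f : ℝ → ℝ} {a : ℝ}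
    (hmono : StrictMonoOn f (Ioi a)) (hcont : ContinuousOn f (Ioi a))
    (hbot : Tendsto f (𝓝[>] a) atBot) (htop : ∀ᶠ z in atTop, 0 < f z) :
    ∃! e, e ∈ Ioi a ∧ f e = 0 := by
  obtain ⟨x, hx, hfx⟩ := ((eventually_mem_nhdsWithin (a := a) (s := Ioi a)).and
    (hbot.eventually (eventually_lt_atBot 0))).exists
  obtain ⟨y, hxy, hfy⟩ := ((eventually_gt_atTop x).and htop).exists
  obtain ⟨e, he, hfe⟩ := intermediate_value_Ioo hxy.le
    (hcont.mono (Icc_subset_Ioi_iff hxy.le |>.2 hx)) ⟨hfx, hfy⟩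
  have hea : e ∈ Ioi a := lt_trans hx he.1
  exact ⟨e, ⟨hea, hfe⟩, fun e' he' => hmono.injOn he'.1 hea (he'.2.trans hfe.symm)⟩

lemma le_apply_of_forall_sum_le {ι α : Type*} [Fintype ι] [DecidableEq ι] {f : ι → α → ℝ}
    {x₀ : ι → α} (h : ∀ x : ι → α, ∑ i, f i (x₀ i) ≤ ∑ i, f i (x i)) (i : ι) (a : α) :
    f i (x₀ i) ≤ f i a := by
  have := h (Function.update x₀ i a)
  rw [Finset.sum_congr rfl fun j _ => Function.apply_update f x₀ i a j,
    Finset.sum_update_of_mem (Finset.mem_univ i),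
    Finset.sum_eq_add_sum_sdiff_singleton_of_mem (Finset.mem_univ i)] at this
  linarith

lemma cos_add_add_mul_cos_sub_le_of_forall_le {γ A B : ℝ} (hγ : 0 ≤ γ)
    (hmin : ∀ s, cos A + γ * cos B ≤ cos (A + s) + γ * cos (B - s)) (t : ℝ) :
    cos (A + t) + γ * cos (B - t) - (cos A + γ * cos B) ≤ (1 + γ) * t ^ 2 / 2 := by
  set a := cos A + γ * cos B
  set b := γ * sin B - sin A
  have hform : ∀ s, cos (A + s) + γ * cos (B - s) = a * cos s + b * sin s := fun s => by
    simp only [a, b, cos_add, cos_sub]; ring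
  have hb : b = 0 := by
    have hloc : IsLocalMin (fun s => a * cos s + b * sin s) 0 :=
      .of_forall fun s => by simpa [← hform] using hmin s
    have hderiv : HasDerivAt (fun s => a * cos s + b * sin s) b 0 := by
      simpa using ((hasDerivAt_cos 0).const_mul a).fun_add ((hasDerivAt_sin 0).const_mul b)
    exact hloc.hasDerivAt_eq_zero hderiv
  have ha : |a| ≤ 1 + γ := (abs_add_le _ _).trans (add_le_add (abs_cos_le_one A) (by
    rw [abs_mul, abs_of_nonneg hγ]; exact mul_le_of_le_one_right hγ (abs_cos_le_one B)))
  have hcos : 0 ≤ 1 - cos t := sub_nonneg.2 (cos_le_one t)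
  calc cos (A + t) + γ * cos (B - t) - a = -a * (1 - cos t) := by rw [hform, hb]; ring
    _ ≤ |a| * (1 - cos t) := mul_le_mul_of_nonneg_right (neg_le_abs a) hcos
    _ ≤ (1 + γ) * (t ^ 2 / 2) :=
      mul_le_mul ha (by linarith [one_sub_sq_div_two_le_cos (x := t)]) hcos (by linarith)
    _ = (1 + γ) * t ^ 2 / 2 := by ring

lemma Real.Angle.norm_eq_abs_toReal (θ : Real.Angle) : ‖θ‖ = |θ.toReal| := by
  conv_lhs => rw [← θ.coe_toReal]
  exact (AddCircle.norm_coe_eq_abs_iff (2 * π) (by positivity)).2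
    (by rw [abs_of_pos two_pi_pos]; linarith [θ.abs_toReal_le_pi])

lemma Real.Angle.cos_add_mul_cos_sub_le_of_forall_le {γ : ℝ} (hγ : 0 ≤ γ) {κ x₀ : Real.Angle}
    (hmin : ∀ x : Real.Angle, x₀.cos + γ * (κ - x₀).cos ≤ x.cos + γ * (κ - x).cos)
    (x : Real.Angle) :
    x.cos + γ * (κ - x).cos - (x₀.cos + γ * (κ - x₀).cos) ≤ (1 + γ) * ‖x - x₀‖ ^ 2 / 2 := by
  induction x₀ using Real.Angle.induction_on with | _ A =>
  induction κ using Real.Angle.induction_on with | _ C =>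
  set t := (x - A).toReal
  have hx : x = ↑(A + t) := by rw [Real.Angle.coe_add, Real.Angle.coe_toReal]; abel
  have hnorm : ‖x - A‖ ^ 2 = t ^ 2 := by rw [Real.Angle.norm_eq_abs_toReal, sq_abs]
  have key := cos_add_add_mul_cos_sub_le_of_forall_le hγ (A := A) (B := C - A) (fun s => by
    simpa only [← Real.Angle.coe_sub, Real.Angle.cos_coe, sub_sub] using hmin ↑(A + s)) t
  rw [hnorm]
  clear_value t
  subst hx
  simpa only [← Real.Angle.coe_sub, Real.Angle.cos_coe, sub_sub] using key

lemma E2_eq (d : ℕ) (γ : ℝ) (k q : Fin d → Real.Angle) :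
    E2 d γ k q = 2 * (1 + γ) * d - 2 * ∑ i, ((q i).cos + γ * (k i - q i).cos) := by
  simp only [E2, eps, Pi.sub_apply, Finset.sum_sub_distrib, Finset.sum_add_distrib,
    Finset.sum_const, Finset.card_univ, Fintype.card_fin, ← Finset.mul_sum, nsmul_eq_mul]
  ring

lemma E2_max_sub_le {d : ℕ} {γ : ℝ} (hγ : 0 ≤ γ) {k q₀ : Fin d → Real.Angle}
    (hq₀ : ∀ q, E2 d γ k q ≤ E2 d γ k q₀) (q : Fin d → Real.Angle) :
    E2 d γ k q₀ - E2 d γ k q ≤ (1 + γ) * ∑ i, ‖q i - q₀ i‖ ^ 2 := by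
  have hmin := le_apply_of_forall_sum_le
    (f := fun i (x : Real.Angle) => x.cos + γ * (k i - x).cos) (x₀ := q₀)
    (fun q : Fin d → Real.Angle => by linarith [hq₀ q, E2_eq d γ k q, E2_eq d γ k q₀])
  rw [E2_eq, E2_eq]
  have := Finset.sum_le_sum fun i (_ : i ∈ Finset.univ) =>
    Real.Angle.cos_add_mul_cos_sub_le_of_forall_le hγ (hmin i) (q i)
  rw [Finset.sum_sub_distrib, ← Finset.sum_div, ← Finset.mul_sum] at this
  linarith

lemma haarT_pi_closedBall (d : ℕ) (x : Fin d → Real.Angle) {r : ℝ} (hr₀ : 0 ≤ r)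
    (hr : r ≤ π) :
    haarT d (univ.pi fun i => Metric.closedBall (x i) r) = ENNReal.ofReal ((r / π) ^ d) := by
  have hball : ∀ i, volume (Metric.closedBall (x i) r) = ENNReal.ofReal (2 * r) := fun i => by
    rw [show volume (Metric.closedBall (x i) r) = ENNReal.ofReal (min (2 * π) (2 * r)) from
      AddCircle.volume_closedBall (2 * π) r, min_eq_right (by linarith)]
  rw [haarT, Measure.smul_apply, smul_eq_mul, volume_pi, Measure.pi_pi]
  simp only [hball, Finset.prod_const, Finset.card_univ, Fintype.card_fin]
  rw [← ENNReal.ofReal_pow (by positivity), ← ENNReal.div_eq_inv_mul,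
    ← ENNReal.ofReal_div_of_pos (by positivity), div_pow, mul_pow, mul_pow,
    mul_div_mul_left _ _ (by positivity)]

instance (d : ℕ) : IsProbabilityMeasure (haarT d) := by
  constructor
  have hball : Metric.closedBall (0 : Real.Angle) π = univ :=
    eq_univ_of_forall fun θ => by
      rw [Metric.mem_closedBall, dist_zero_right, Real.Angle.norm_eq_abs_toReal]
      exact θ.abs_toReal_le_pi
  simpa [hball, div_self pi_ne_zero] using haarT_pi_closedBall d 0 pi_pos.le le_rfl

lemma ofReal_mul_le_haarT_E2_max_sub_lt {d : ℕ} (hd : d ≤ 2) {γ : ℝ} (hγ : 0 ≤ γ)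
    {k q₀ : Fin d → Real.Angle} (hq₀ : ∀ q, E2 d γ k q ≤ E2 d γ k q₀) {t : ℝ} (ht₀ : 0 < t)
    (ht₁ : t ≤ 1) :
    ENNReal.ofReal ((4 * (1 + γ) * π ^ 2)⁻¹ * t) ≤
      haarT d {q | E2 d γ k q₀ - E2 d γ k q < t} := by
  set r := √(t / (4 * (1 + γ)))
  have hr₀ : 0 ≤ r := sqrt_nonneg _
  have hr2 : r ^ 2 = t / (4 * (1 + γ)) := sq_sqrt (by positivity)
  have hr2le : r ^ 2 ≤ 1 := by
    rw [hr2, div_le_one (by positivity)]; linarith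
  have hrπ : r ≤ π := by nlinarith [pi_gt_three]
  have hbox : (univ.pi fun i => Metric.closedBall (q₀ i) r) ⊆
      {q | E2 d γ k q₀ - E2 d γ k q < t} := fun q hq => by
    have hsum : ∑ i, ‖q i - q₀ i‖ ^ 2 ≤ 2 * r ^ 2 :=
      calc ∑ i, ‖q i - q₀ i‖ ^ 2 ≤ ∑ _i : Fin d, r ^ 2 := Finset.sum_le_sum fun i _ => by
            have := hq i (mem_univ i)
            rw [Metric.mem_closedBall, dist_eq_norm] at this
            exact pow_le_pow_left₀ (norm_nonneg _) this 2
        _ = d * r ^ 2 := by simp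
        _ ≤ 2 * r ^ 2 := by gcongr; exact_mod_cast hd
    have := E2_max_sub_le hγ hq₀ q
    have : (1 + γ) * (2 * r ^ 2) = t / 2 := by rw [hr2]; field_simp; ring
    show E2 d γ k q₀ - E2 d γ k q < t
    nlinarith
  calc ENNReal.ofReal ((4 * (1 + γ) * π ^ 2)⁻¹ * t) = ENNReal.ofReal ((r / π) ^ 2) := by
        rw [div_pow, hr2]; field_simp
    _ ≤ ENNReal.ofReal ((r / π) ^ d) := ENNReal.ofReal_le_ofReal
        (pow_le_pow_of_le_one (by positivity) ((div_le_one pi_pos).2 hrπ) hd)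
    _ = haarT d (univ.pi fun i => Metric.closedBall (q₀ i) r) :=
        (haarT_pi_closedBall d q₀ hr₀ hrπ).symm
    _ ≤ _ := measure_mono hbox

lemma setLIntegral_ofReal_const_mul_inv_Ioi_eq_top {c : ℝ} (hc : 0 < c) (a : ℝ) (ha : 0 ≤ a) :
    ∫⁻ s in Ioi a, ENNReal.ofReal (c * s⁻¹) = ⊤ := by
  have hinv : ∫⁻ s in Ioi a, ENNReal.ofReal s⁻¹ = ⊤ := by
    by_contra h
    exact not_integrableOn_Ioi_inv ((lintegral_ofReal_ne_top_iff_integrable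
      measurable_inv.aestronglyMeasurable (ae_restrict_of_forall_mem measurableSet_Ioi
        fun s hs => inv_nonneg.2 (ha.trans (le_of_lt hs)))).1 h)
  simp_rw [ENNReal.ofReal_mul hc.le]
  rw [lintegral_const_mul _ measurable_inv.ennreal_ofReal, hinv,
    ENNReal.mul_top (ENNReal.ofReal_pos.2 hc).ne']

lemma lintegral_inv_ofReal_eq_top {X : Type*} [MeasurableSpace X] {η : Measure X} {g : X → ℝ}
    (hg : Measurable g) (hg₀ : ∀ x, 0 ≤ g x) {c : ℝ} (hc : 0 < c)
    (hlow : ∀ t, 0 < t → t ≤ 1 → ENNReal.ofReal (c * t) ≤ η {x | g x < t}) :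
    ∫⁻ x, (ENNReal.ofReal (g x))⁻¹ ∂η = ⊤ := by
  by_cases hzero : η {x | g x = 0} = 0
  · have hpos : ∀ᵐ x ∂η, 0 < g x := by
      refine (measure_eq_zero_iff_ae_notMem.1 hzero).mono fun x hx => ?_
      exact lt_of_le_of_ne (hg₀ x) (Ne.symm hx)
    rw [lintegral_congr_ae (hpos.mono fun x hx => (ENNReal.ofReal_inv_of_pos hx).symm),
      lintegral_eq_lintegral_meas_lt η (.of_forall fun x => inv_nonneg.2 (hg₀ x))
        hg.inv.aemeasurable]
    refine top_unique ?_
    calc ⊤ = ∫⁻ s in Ioi 1, ENNReal.ofReal (c * s⁻¹) :=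
          (setLIntegral_ofReal_const_mul_inv_Ioi_eq_top hc 1 zero_le_one).symm
      _ ≤ ∫⁻ s in Ioi 1, η {x | s < (g x)⁻¹} := setLIntegral_mono' measurableSet_Ioi
          fun s (hs : 1 < s) => by
            have hs₀ : 0 < s := one_pos.trans hs
            calc ENNReal.ofReal (c * s⁻¹) ≤ η {x | g x < s⁻¹} :=
                  hlow _ (inv_pos.2 hs₀) (inv_le_one_of_one_le₀ hs.le)
              _ = η ({x | g x < s⁻¹} \ {x | g x = 0}) := (measure_sdiff_null hzero).symm
              _ ≤ η {x | s < (g x)⁻¹} := measure_mono fun x ⟨hlt, hne⟩ =>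
                  (lt_inv_comm₀ hs₀ (lt_of_le_of_ne (hg₀ x) (Ne.symm hne))).2 hlt
      _ ≤ ∫⁻ s in Ioi 0, η {x | s < (g x)⁻¹} :=
          lintegral_mono_set (Ioi_subset_Ioi zero_le_one)
  · refine top_unique ?_
    calc ⊤ = ⊤ * η {x | g x = 0} := (ENNReal.top_mul hzero).symm
      _ ≤ ⊤ * η {x | ⊤ ≤ (ENNReal.ofReal (g x))⁻¹} := by
          gcongr with x
          simp only [top_le_iff, ENNReal.inv_eq_top, ENNReal.ofReal_eq_zero]
          exact le_of_eq
      _ ≤ ∫⁻ x, (ENNReal.ofReal (g x))⁻¹ ∂η :=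
          mul_meas_ge_le_lintegral₀ hg.ennreal_ofReal.inv.aemeasurable ⊤

lemma lintegral_inv_E2_max_sub_eq_top {d : ℕ} (hd : d ≤ 2) {γ : ℝ} (hγ : 0 ≤ γ)
    {k q₀ : Fin d → Real.Angle} (hq₀ : ∀ q, E2 d γ k q ≤ E2 d γ k q₀) :
    ∫⁻ q, (ENNReal.ofReal (E2 d γ k q₀ - E2 d γ k q))⁻¹ ∂haarT d = ⊤ :=
  lintegral_inv_ofReal_eq_top (measurable_const.sub (continuous_E2 d γ k).measurable)
    (fun q => sub_nonneg.2 (hq₀ q)) (by positivity)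
    fun _ ht₀ ht₁ => ofReal_mul_le_haarT_E2_max_sub_lt hd hγ hq₀ ht₀ ht₁

theorem stmt4_general (d : ℕ) (hd : d = 1 ∨ d = 2) (γ μ : ℝ) (hγ : 0 < γ) (hμ : 0 < μ)
    (k : Fin d → Real.Angle) :
    let Emax := sSup (Set.range (E2 d γ k))
    let Δ : ℝ → ℝ := fun z => 1 + μ * ∫ q, (E2 d γ k q - z)⁻¹ ∂(haarT d)
    StrictMonoOn Δ (Set.Ioi Emax) ∧
    Filter.Tendsto Δ Filter.atTop (nhds 1) ∧
    Filter.Tendsto Δ (nhdsWithin Emax (Set.Ioi Emax)) Filter.atBot ∧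
    ∃! e, e ∈ Set.Ioi Emax ∧ Δ e = 0 := by
  intro Emax Δ
  have hE : Measurable (E2 d γ k) := (continuous_E2 d γ k).measurable
  obtain ⟨q₀, hq₀⟩ := (continuous_E2 d γ k).exists_forall_ge (by simp [cocompact_eq_bot])
  have hEmax : Emax = E2 d γ k q₀ :=
    IsGreatest.csSup_eq ⟨mem_range_self q₀, forall_mem_range.2 hq₀⟩
  have hM : ∀ q, E2 d γ k q ≤ Emax := hEmax ▸ hq₀
  have hdiv := hEmax ▸ lintegral_inv_E2_max_sub_eq_top (by omega) hγ.le hq₀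
  have hmono : StrictMonoOn Δ (Ioi Emax) := fun z hz z' hz' hzz' => add_lt_add_right
    (mul_lt_mul_of_pos_left (strictMonoOn_integral_inv_sub hE hM hz hz' hzz') hμ) 1
  have htop : Tendsto Δ atTop (𝓝 1) := by
    simpa [Δ] using ((tendsto_integral_inv_sub_atTop hM).const_mul μ).const_add 1
  have hbot : Tendsto Δ (𝓝[>] Emax) atBot := tendsto_atBot_add_const_left _ 1
    ((tendsto_integral_inv_sub_nhdsGT_atBot hE hM hdiv).const_mul_atBot hμ)
  refine ⟨hmono, htop, hbot, existsUnique_eq_zero_of_strictMonoOn_Ioi hmono ?_ hbot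
    (htop.eventually (eventually_gt_nhds one_pos))⟩
  exact continuousOn_const.add (continuousOn_const.mul (continuousOn_integral_inv_sub hE hM))

/-- for `μ > 0`, `Δ_μ(z) = 1 + μ ∫ (E(q) - z)⁻¹ η(dq)` is strictly increasing
on `(E_max, ∞)`, tends to `1` at `+∞` and to `-∞` as `z ↓ E_max` (for `d = 1, 2`);
hence it has a unique zero `e_μ > E_max`. -/
theorem stmt4 (d : ℕ) (hd : d = 1 ∨ d = 2) (γ μ : ℝ) (hγ : 0 < γ) (hμ : 0 < μ)
    (k : Fin d → Real.Angle) (hnc : ∃ q q', E2 d γ k q ≠ E2 d γ k q') :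
    let Emax := sSup (Set.range (E2 d γ k))
    let Δ : ℝ → ℝ := fun z => 1 + μ * ∫ q, (E2 d γ k q - z)⁻¹ ∂(haarT d)
    StrictMonoOn Δ (Set.Ioi Emax) ∧
    Filter.Tendsto Δ Filter.atTop (nhds 1) ∧
    Filter.Tendsto Δ (nhdsWithin Emax (Set.Ioi Emax)) Filter.atBot ∧
    ∃! e, e ∈ Set.Ioi Emax ∧ Δ e = 0 :=
  stmt4_general d hd γ μ hγ hμ k
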